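/- Let u = x_1^{a_1}···x_n^{a_n} with a_1 > 0 and v = x_1^{b_1}···x_n^{b_n} be monomials of degree d with u ≥_lex v, and let I = (L(u,v)) be a completely lexsegment ideal which has linear quotients with respect to the ordering of L(u,v) given by ≺. If w ∈ L(u,v) and s ∈ set(w), then: g(x_s·w) = x_s·w/x_1 if x_s·w ≥_lex x_1·v, and g(x_s·w) = x_s·w/x_{max(w)} if x_s·w <_lex x_1·v. -/

import Mathlib

open MvPolynomial

/-- Exponent vectors of monomials in `n` variables; index `i` corresponds to the variable
`x_{i+1}`, so that the `toLex` order on exponent vectors is the lexicographic order on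
monomials with `x_1 > x_2 > ⋯ > x_n`. -/
abbrev Mon (n : ℕ) := Fin n →₀ ℕ

/-- The degree of a monomial. -/
def monDeg {n : ℕ} (m : Mon n) : ℕ := ∑ i, m i

/-- The lexsegment `L(u,v)`: monomials of degree `d` with `u ≥_lex w ≥_lex v`. -/
def lexSeg {n : ℕ} (d : ℕ) (u v : Mon n) : Set (Mon n) :=
  {w | monDeg w = d ∧ toLex v ≤ toLex w ∧ toLex w ≤ toLex u}

/-- The monomial ideal generated by a set of monomials. -/
noncomputable def monomialIdeal {n : ℕ} (k : Type*) [Field k] (T : Set (Mon n)) :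
    Ideal (MvPolynomial (Fin n) k) :=
  Ideal.span ((fun m => (monomial m (1 : k) : MvPolynomial (Fin n) k)) '' T)

/-- The order `≺` on monomials of a fixed degree: `w ≺ w'` iff `ν₁(w) < ν₁(w')`, or
`ν₁(w) = ν₁(w')` and `w >_lex w'`. -/
def prec {n : ℕ} [NeZero n] (z w : Mon n) : Prop :=
  z 0 < w 0 ∨ (z 0 = w 0 ∧ toLex w < toLex z)

/-- A set `T` of monomials, totally ordered by a relation `r`, generates an ideal with linear
quotients with respect to `r` if for every `w ∈ T` the colon ideal of the ideal generated by
the earlier monomials `{z ∈ T | r z w}` by `w` is generated by a subset of the variables. -/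
noncomputable def hasLinearQuotientsWrt {n : ℕ} (k : Type*) [Field k] (T : Set (Mon n))
    (r : Mon n → Mon n → Prop) : Prop :=
  ∀ w ∈ T, ∃ V : Set (Fin n),
    Submodule.colon (monomialIdeal k {z ∈ T | r z w})
        (Ideal.span {(monomial w (1 : k) : MvPolynomial (Fin n) k)}) =
      Ideal.span ((fun i => (X i : MvPolynomial (Fin n) k)) '' V)

/-- `max(m)`: the largest index of a variable dividing the monomial `m`. -/
def maxVar {n : ℕ} [NeZero n] (m : Mon n) : Fin n := WithBot.unbotD 0 m.support.max

/-- The shadow of a set of monomials. -/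
def shad {n : ℕ} (T : Set (Mon n)) : Set (Mon n) :=
  {m | ∃ t ∈ T, ∃ i : Fin n, m = t + Finsupp.single i 1}

/-- A set of monomials is a lexsegment if it is of the form `L(u,v)`. -/
def IsLexSegSet {n : ℕ} (T : Set (Mon n)) : Prop :=
  ∃ (e : ℕ) (u v : Mon n), monDeg u = e ∧ monDeg v = e ∧ toLex v ≤ toLex u ∧ T = lexSeg e u v

/-- A lexsegment is a completely lexsegment if all its iterated shadows are lexsegments. -/
def IsCompletelyLexSeg {n : ℕ} (T : Set (Mon n)) : Prop :=
  ∀ j : ℕ, IsLexSegSet (shad^[j] T)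

/-- `set(w)` for `w ∈ L(u,v)`: the set of `s` with `x_s · w ∈ I_{≺ w}`, where `I_{≺ w}` is the
ideal generated by `{z ∈ L(u,v) | z ≺ w}`. -/
noncomputable def setW {n : ℕ} [NeZero n] (k : Type*) [Field k] (d : ℕ) (u v : Mon n)
    (w : Mon n) : Set (Fin n) :=
  {s | (monomial (w + Finsupp.single s 1) (1 : k) : MvPolynomial (Fin n) k) ∈
    monomialIdeal k {z ∈ lexSeg d u v | prec z w}}

/-- `g` is the value of the decomposition function of `I = (L(u,v))` at the monomial `m`:
`g` is the `≺`-smallest `w' ∈ L(u,v)` such that `m ∈ I_{⪯ w'}`. -/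
noncomputable def isDecompOf {n : ℕ} [NeZero n] (k : Type*) [Field k] (d : ℕ) (u v : Mon n)
    (m : Mon n) (g : Mon n) : Prop :=
  g ∈ lexSeg d u v ∧
  (monomial m (1 : k) : MvPolynomial (Fin n) k) ∈
      monomialIdeal k {z ∈ lexSeg d u v | prec z g ∨ z = g} ∧
  ∀ w' ∈ lexSeg d u v,
    (monomial m (1 : k) : MvPolynomial (Fin n) k) ∈
        monomialIdeal k {z ∈ lexSeg d u v | prec z w' ∨ z = w'} →
      g = w' ∨ prec g w'

/-- Reversing the variables: the `toLex` order on `revMon` exponent vectors is the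
lexicographic order induced by `x_n > x_{n-1} > ⋯ > x_1`. -/
def revMon {n : ℕ} (m : Mon n) : Mon n := Finsupp.equivMapDomain Fin.revPerm m

/-- The depth of `S/I` with respect to the graded maximal ideal `(x_1, …, x_n)`:
the maximal length of an `S/I`-regular sequence of elements of `(x_1, …, x_n)`. -/
noncomputable def ringDepth {n : ℕ} {k : Type*} [Field k]
    (I : Ideal (MvPolynomial (Fin n) k)) : ℕ :=
  sSup {r : ℕ | ∃ rs : List (MvPolynomial (Fin n) k), rs.length = r ∧
    (∀ x ∈ rs, x ∈ Ideal.span (Set.range (X : Fin n → MvPolynomial (Fin n) k))) ∧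
    RingTheory.Sequence.IsRegular (MvPolynomial (Fin n) k ⧸ I) rs}


/-!
Write `m = x_s w`. If `m ≥_lex x_1 v`, then `m / x_1` lies in `L(u,v)`, and every other divisor
of `m` of degree `d` has a larger `x_1`-exponent, so comes later in `≺`.

If `m <_lex x_1 v`, no divisor `m / x_1` lies in `L(u,v)`; the divisors `m / x_j` in `L(u,v)` all
have the `x_1`-exponent of `m`, and `m / x_j ≺ m / x_{j'}` exactly when `j > j'`. Since
`s ∈ set(w)`, two of them exist, `w = m / x_s` and some `m / x_t` with `s < t`, and the heart of
the proof is that linear quotients then force `m / x_{max(m)} ∈ L(u,v)`; as `s < t ≤ max(w)`,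
`max(m) = max(w)`.
-/

local notation "e(" i ")" => Finsupp.single i (1 : ℕ)

section ExponentVectors

variable {σ : Type*}

lemma exists_add_single_eq {x : σ →₀ ℕ} {i : σ} (hi : x i ≠ 0) : ∃ y, y + e(i) = x :=
  ⟨x - e(i), tsub_add_cancel_of_le (Finsupp.single_le_iff.mpr (Nat.one_le_iff_ne_zero.mpr hi))⟩

lemma exists_add_single_add_single_eq {x : σ →₀ ℕ} {i j : σ} (hij : i ≠ j) (hi : x i ≠ 0)
    (hj : x j ≠ 0) : ∃ y, y + e(i) + e(j) = x := by
  obtain ⟨y, rfl⟩ := exists_add_single_eq hj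
  obtain ⟨y', rfl⟩ := exists_add_single_eq (x := y) (i := i) (by simpa [hij] using hi)
  exact ⟨y', rfl⟩

lemma apply_eq_of_add_single_eq {x y : σ →₀ ℕ} {i j : σ} (h : x + e(i) = y) (hij : i ≠ j) :
    x j = y j := by
  simp [← h, Finsupp.single_eq_of_ne' hij]

lemma apply_add_one_of_add_single_eq {x y : σ →₀ ℕ} {i : σ} (h : x + e(i) = y) :
    x i + 1 = y i := by
  simp [← h]

lemma exists_eq_single_of_degree_eq_one {x : σ →₀ ℕ} (h : x.degree = 1) :
    ∃ i, x = e(i) := by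
  obtain ⟨i, hi⟩ : x.support.Nonempty := by
    rw [Finsupp.support_nonempty_iff]
    rintro rfl
    simp at h
  obtain ⟨y, rfl⟩ := exists_add_single_eq (Finsupp.mem_support_iff.mp hi)
  have hy : y.degree = 0 := by simpa using h
  rw [Finsupp.degree_eq_zero_iff] at hy
  exact ⟨i, by simp [hy]⟩

lemma exists_add_single_eq_of_le {z m : σ →₀ ℕ} (hle : z ≤ m) (h : m.degree = z.degree + 1) :
    ∃ i, z + e(i) = m := by
  obtain ⟨i, hi⟩ := exists_eq_single_of_degree_eq_one (x := m - z) (by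
    have := map_add Finsupp.degree z (m - z)
    rw [add_tsub_cancel_of_le hle] at this
    omega)
  exact ⟨i, by rw [← hi, add_tsub_cancel_of_le hle]⟩

variable [LinearOrder σ]

lemma toLex_add_single_lt_add_single (x : σ →₀ ℕ) {i j : σ} (hij : i < j) :
    toLex (x + e(j)) < toLex (x + e(i)) :=
  add_lt_add_right (Finsupp.Lex.single_lt_iff.mpr hij) (toLex x)

lemma toLex_add_lt_add_iff_right {x y c : σ →₀ ℕ} :
    toLex (x + c) < toLex (y + c) ↔ toLex x < toLex y :=
  add_lt_add_iff_right (toLex c)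

lemma toLex_lt_of_add_single_eq {x y : σ →₀ ℕ} {i j : σ} (h : x + e(i) = y + e(j))
    (hij : i < j) : toLex x < toLex y :=
  toLex_add_lt_add_iff_right.mp (h ▸ toLex_add_single_lt_add_single y hij)

lemma Finset.exists_two_greatest {s : Finset σ} {p q : σ} (hp : p ∈ s) (hq : q ∈ s)
    (hpq : p < q) : ∃ P ∈ s, ∃ Q ∈ s, P < Q ∧ (∀ j ∈ s, j ≤ Q) ∧ ∀ j ∈ s, j < Q → j ≤ P := by
  have hne : (s.filter (· < s.max' ⟨q, hq⟩)).Nonempty :=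
    ⟨p, Finset.mem_filter.mpr ⟨hp, hpq.trans_le (s.le_max' q hq)⟩⟩
  obtain ⟨hPs, hPQ⟩ := Finset.mem_filter.mp ((s.filter _).max'_mem hne)
  exact ⟨_, hPs, _, s.max'_mem ⟨q, hq⟩, hPQ, fun j hj => s.le_max' j hj,
    fun j hj hjQ => (s.filter _).le_max' j (Finset.mem_filter.mpr ⟨hj, hjQ⟩)⟩

end ExponentVectors

section Monomials

variable {n : ℕ}

lemma monDeg_eq_degree (x : Mon n) : monDeg x = x.degree :=
  (Finsupp.degree_eq_sum x).symm

@[simp]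
lemma monDeg_add (x y : Mon n) : monDeg (x + y) = monDeg x + monDeg y := by
  simp [monDeg_eq_degree]

@[simp]
lemma monDeg_single (i : Fin n) (c : ℕ) : monDeg (Finsupp.single i c) = c := by
  simp [monDeg_eq_degree]

variable [NeZero n]

lemma toLex_lt_of_apply_zero_lt {x y : Mon n} (h : x 0 < y 0) : toLex x < toLex y :=
  Finsupp.Lex.lt_iff.mpr ⟨0, fun j hj => absurd hj (Fin.not_lt_zero j), h⟩

lemma apply_zero_le_of_toLex_le {x y : Mon n} (h : toLex x ≤ toLex y) : x 0 ≤ y 0 :=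
  not_lt.mp fun hlt => (toLex_lt_of_apply_zero_lt hlt).not_ge h

lemma le_maxVar {m : Mon n} {i : Fin n} (h : m i ≠ 0) : i ≤ maxVar m := by
  obtain ⟨a, ha⟩ := Finset.max_of_mem (Finsupp.mem_support_iff.mpr h)
  rw [maxVar, ha, WithBot.unbotD_coe]
  exact Finset.le_max_of_eq (Finsupp.mem_support_iff.mpr h) ha

lemma apply_maxVar_ne_zero {m : Mon n} (h : m ≠ 0) : m (maxVar m) ≠ 0 := by
  obtain ⟨a, ha⟩ := Finset.max_of_nonempty (Finsupp.support_nonempty_iff.mpr h)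
  rw [maxVar, ha, WithBot.unbotD_coe]
  exact Finsupp.mem_support_iff.mp (Finset.mem_of_max ha)

lemma maxVar_add_single {w : Mon n} {s : Fin n} (hw : w ≠ 0) (hs : s ≤ maxVar w) :
    maxVar (w + e(s)) = maxVar w := by
  refine le_antisymm ?_ (le_maxVar (by simp [apply_maxVar_ne_zero hw]))
  have hne := apply_maxVar_ne_zero (m := w + e(s)) (by simp)
  by_cases h : s = maxVar (w + e(s))
  · exact h ▸ hs
  · exact le_maxVar (by simpa [Finsupp.single_eq_of_ne' h] using hne)

end Monomials

section MonomialIdeal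

variable {n : ℕ} {k : Type*} [Field k]

lemma monomial_mem_monomialIdeal_iff {T : Set (Mon n)} {a : Mon n} :
    (monomial a (1 : k) : MvPolynomial (Fin n) k) ∈ monomialIdeal k T ↔ ∃ t ∈ T, t ≤ a := by
  classical
  simp [monomialIdeal, mem_ideal_span_monomial_image, support_monomial]

/-- `z / gcd(z, w)` lies in the colon ideal, so it is divisible by one of the variables `x_i`
generating it. -/
lemma exists_apply_lt_of_hasLinearQuotientsWrt {T : Set (Mon n)} {r : Mon n → Mon n → Prop}
    (hlq : hasLinearQuotientsWrt k T r) {w z : Mon n} (hw : w ∈ T) (hz : z ∈ T) (hzw : r z w) :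
    ∃ i, w i < z i ∧ ∃ y ∈ T, r y w ∧ y ≤ w + e(i) := by
  classical
  obtain ⟨V, hV⟩ := hlq w hw
  have hcolon : ∀ a : Mon n, (monomial a (1 : k) : MvPolynomial (Fin n) k) ∈
      Submodule.colon (monomialIdeal k {y ∈ T | r y w})
        (Ideal.span {(monomial w (1 : k) : MvPolynomial (Fin n) k)}) ↔
      ∃ y ∈ T, r y w ∧ y ≤ a + w := by
    intro a
    rw [Submodule.mem_colon_span_singleton, smul_eq_mul, monomial_mul, one_mul,
      monomial_mem_monomialIdeal_iff]
    simp [and_assoc]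
  have hX : ((fun i => (X i : MvPolynomial (Fin n) k)) '' V) =
      (fun m => (monomial m (1 : k) : MvPolynomial (Fin n) k)) '' ((fun i => e(i)) '' V) := by
    rw [Set.image_image]
    rfl
  obtain ⟨-, ⟨i, hi, rfl⟩, hle⟩ := (mem_ideal_span_monomial_image.mp
    (hX ▸ hV ▸ (hcolon (z - w)).mpr ⟨z, hz, hzw, le_tsub_add⟩)) (z - w) (by simp [support_monomial])
  have hXi := (hcolon (e(i))).mp (hV ▸ Ideal.subset_span (Set.mem_image_of_mem _ hi))
  refine ⟨i, ?_, by simpa [add_comm] using hXi⟩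
  have := Finsupp.single_le_iff.mp hle
  simp only [Finsupp.coe_tsub, Pi.sub_apply] at this
  omega

end MonomialIdeal

section Collapse

variable {σ : Type*} [LinearOrder σ]

lemma toLex_le_single_degree {y : σ →₀ ℕ} {Q : σ} (hy : ∀ j < Q, y j = 0) :
    toLex y ≤ toLex (Finsupp.single Q y.degree) := by
  rcases (Finsupp.le_degree Q y).lt_or_eq with hlt | heq
  · refine (Finsupp.Lex.lt_iff.mpr ⟨Q, fun j hj => ?_, by simpa using hlt⟩).le
    simp [hy j hj, Finsupp.single_eq_of_ne hj.ne]
  · have h := congrArg Finsupp.degree (Finsupp.erase_add_single Q y)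
    rw [map_add, Finsupp.degree_single, ← heq, add_eq_right, Finsupp.degree_eq_zero_iff] at h
    rw [← Finsupp.erase_add_single Q y, h, zero_add, Finsupp.degree_single]

/-- The lexicographically largest exponent vector of the same degree as `x` that agrees with `x`
below `Q`: all of the mass of `x` at or after `Q` is moved to `Q`. -/
noncomputable def collapseFrom (Q : σ) (x : σ →₀ ℕ) : σ →₀ ℕ :=
  x.filter (· < Q) + Finsupp.single Q (x.filter (¬ · < Q)).degree

lemma collapseFrom_apply_of_lt {Q j : σ} (x : σ →₀ ℕ) (hj : j < Q) :
    collapseFrom Q x j = x j := by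
  simp [collapseFrom, hj, Finsupp.single_eq_of_ne hj.ne]

lemma collapseFrom_apply_of_gt {Q j : σ} (x : σ →₀ ℕ) (hj : Q < j) :
    collapseFrom Q x j = 0 := by
  simp [collapseFrom, hj.not_gt, Finsupp.single_eq_of_ne hj.ne']

lemma degree_collapseFrom (Q : σ) (x : σ →₀ ℕ) : (collapseFrom Q x).degree = x.degree := by
  conv_rhs => rw [← Finsupp.filter_add_filter_not x (· < Q)]
  simp [collapseFrom]

lemma toLex_le_collapseFrom (Q : σ) (x : σ →₀ ℕ) : toLex x ≤ toLex (collapseFrom Q x) := by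
  conv_lhs => rw [← Finsupp.filter_add_filter_not x (· < Q)]
  exact add_le_add_right
    (toLex_le_single_degree fun j hj => Finsupp.filter_apply_neg _ _ (not_not.mpr hj)) _

end Collapse

section Prec

variable {n : ℕ} [NeZero n]

lemma prec_trans {a b c : Mon n} (h1 : prec a b) (h2 : prec b c) : prec a c := by
  rcases h1 with h1 | ⟨e1, l1⟩ <;> rcases h2 with h2 | ⟨e2, l2⟩
  · exact Or.inl (h1.trans h2)
  · exact Or.inl (e2 ▸ h1)
  · exact Or.inl (e1 ▸ h2)
  · exact Or.inr ⟨e1.trans e2, l2.trans l1⟩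

lemma prec_of_add_single_zero_eq {y z : Mon n} {τ : Fin n} (h : y + e(0) = z + e(τ))
    (hτ : τ ≠ 0) : prec y z := by
  have := congrArg (· 0) h
  simp only [Finsupp.add_apply, Finsupp.single_eq_same, Finsupp.single_eq_of_ne' hτ] at this
  exact Or.inl (by omega)

lemma prec_of_add_single_eq_of_lt {y z : Mon n} {j τ : Fin n} (h : y + e(j) = z + e(τ))
    (hτ : τ ≠ 0) (hτj : τ < j) : prec y z := by
  have := congrArg (· 0) h
  simp only [Finsupp.add_apply, Finsupp.single_eq_of_ne' hτ,
    Finsupp.single_eq_of_ne' (Fin.pos_iff_ne_zero.mpr hτ |>.trans hτj).ne'] at this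
  exact Or.inr ⟨by omega, toLex_lt_of_add_single_eq h.symm hτj⟩

lemma lt_of_prec_of_add_single_eq {z y : Mon n} {τ i : Fin n} (h : z + e(τ) = y + e(i))
    (hτ : τ ≠ 0) (hzy : prec z y) : i < τ := by
  by_contra! hτi
  have hi : i ≠ 0 := (Fin.pos_iff_ne_zero.mpr hτ |>.trans_le hτi).ne'
  have h0 := congrArg (· 0) h
  simp only [Finsupp.add_apply, Finsupp.single_eq_of_ne' hτ, Finsupp.single_eq_of_ne' hi] at h0
  rcases hzy with hlt | ⟨-, hlt⟩
  · omega
  · rcases hτi.lt_or_eq with hτi | rfl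
    · exact (toLex_lt_of_add_single_eq h hτi).not_gt hlt
    · exact hlt.ne (congrArg toLex (add_right_cancel h)).symm

end Prec

section LexSeg

variable {n : ℕ} {d : ℕ} {u v : Mon n}

lemma monDeg_eq_of_add_single_eq {z A : Mon n} {τ : Fin n} (h : z + e(τ) = A)
    (hA : monDeg A = d + 1) : monDeg z = d := by
  have := congrArg monDeg h
  simp only [monDeg_add, monDeg_single] at this
  omega

lemma exists_add_single_eq_of_mem_lexSeg {z N : Mon n} (hz : z ∈ lexSeg d u v) (hle : z ≤ N)
    (hN : monDeg N = d + 1) : ∃ τ, z + e(τ) = N :=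
  exists_add_single_eq_of_le hle (by rw [← monDeg_eq_degree, ← monDeg_eq_degree, hN, hz.1])

lemma toLex_lt_of_add_single_eq_of_not_mem {zq z A : Mon n} {q j : Fin n}
    (hq : zq ∈ lexSeg d u v) (hzq : zq + e(q) = A) (hz : z + e(j) = A) (hqj : q < j)
    (hzL : z ∉ lexSeg d u v) : toLex u < toLex z := by
  have hdeg : monDeg z = d := monDeg_eq_of_add_single_eq hz (by rw [← hzq]; simp [hq.1])
  have hvz : toLex v ≤ toLex z :=
    hq.2.1.trans (toLex_lt_of_add_single_eq (hzq.trans hz.symm) hqj).le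
  exact not_le.mp fun hzu => hzL ⟨hdeg, hvz, hzu⟩

variable [NeZero n]

lemma ne_zero_of_add_single_eq {z N : Mon n} {τ : Fin n} (hz : z ∈ lexSeg d u v)
    (h : z + e(τ) = N) (hN : toLex N < toLex (v + e(0))) : τ ≠ 0 := by
  rintro rfl
  rw [← h, toLex_add, toLex_add, add_lt_add_iff_right] at hN
  exact hN.not_ge hz.2.1

lemma isDecompOf_of_forall {k : Type*} [Field k] {m G : Mon n} (hm : monDeg m = d + 1)
    (hG : G ∈ lexSeg d u v) (hGm : G ≤ m)
    (hmin : ∀ z ∈ lexSeg d u v, ∀ τ, z + e(τ) = m → G = z ∨ prec G z) :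
    isDecompOf k d u v m G := by
  refine ⟨hG, monomial_mem_monomialIdeal_iff.mpr ⟨G, ⟨hG, Or.inr rfl⟩, hGm⟩, fun w' _ hmem => ?_⟩
  obtain ⟨z, ⟨hz, hzw⟩, hzm⟩ := monomial_mem_monomialIdeal_iff.mp hmem
  obtain ⟨τ, hτ⟩ := exists_add_single_eq_of_mem_lexSeg hz hzm hm
  rcases hmin z hz τ hτ with rfl | hGz
  · exact hzw.symm
  · rcases hzw with hzw | rfl
    · exact Or.inr (prec_trans hGz hzw)
    · exact Or.inr hGz

end LexSeg

section LinearQuotients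

variable {n : ℕ} [NeZero n] {k : Type*} [Field k] {d : ℕ} {u v : Mon n} {C z : Mon n}
  {P Q r τ : Fin n}

lemma not_prec_sq_of_add_single_eq_add_single_right (hPQ : P < Q) (hQr : Q < r)
    (hCr : ∀ j, r < j → C j = 0) (hA : toLex (C + e(P) + e(Q) + e(r)) < toLex (v + e(0)))
    (hz : z ∈ lexSeg d u v) (h : z + e(τ) = C + e(Q) + e(Q) + e(r)) :
    ¬ prec z (C + e(Q) + e(Q)) := by
  intro hzw
  have hlt : toLex (C + e(Q) + e(Q) + e(r)) < toLex (C + e(P) + e(Q) + e(r)) := by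
    rw [show C + e(Q) + e(Q) + e(r) = C + e(Q) + e(r) + e(Q) by abel,
      show C + e(P) + e(Q) + e(r) = C + e(Q) + e(r) + e(P) by abel]
    exact toLex_add_single_lt_add_single _ hPQ
  have hrτ : r < τ := lt_of_prec_of_add_single_eq h (ne_zero_of_add_single_eq hz h (hlt.trans hA)) hzw
  have := congrArg (· τ) h
  simp [hCr τ hrτ, hrτ.ne, (hQr.trans hrτ).ne] at this

lemma not_prec_sq_of_add_single_eq_add_single_left (hPQ : P < Q) (hQr : Q < r)
    (hgap : ∀ j y, P < j → j < Q → y + e(j) = C + e(P) + e(Q) + e(r) → y ∉ lexSeg d u v)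
    (hzr : toLex u < toLex (C + e(P) + e(Q))) (hzP : C + e(Q) + e(r) ∈ lexSeg d u v)
    (hz : z ∈ lexSeg d u v) (hτ : τ ≠ 0) (h : z + e(τ) = C + e(Q) + e(Q) + e(P)) :
    ¬ prec z (C + e(Q) + e(Q)) := by
  intro hzw
  have hPτ : P < τ := lt_of_prec_of_add_single_eq h hτ hzw
  have h' : z + e(τ) = C + e(P) + e(Q) + e(Q) := h.trans (by abel)
  rcases lt_trichotomy τ Q with hτQ | rfl | hQτ
  · have hCτ : C τ ≠ 0 := by
      have := congrArg (· τ) h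
      simp [hPτ.ne, hτQ.ne] at this
      omega
    obtain ⟨y, hy⟩ := exists_add_single_eq (x := C + e(P) + e(Q) + e(r)) (i := τ) (by simp [hCτ])
    have hyz : toLex y < toLex z := toLex_add_lt_add_iff_right.mp (by
      rw [hy, h']
      exact toLex_add_single_lt_add_single _ hQr)
    refine hgap τ y hPτ hτQ hy ⟨monDeg_eq_of_add_single_eq hy ?_, ?_, (hyz.trans_le hz.2.2).le⟩
    · have := hzP.1
      simp only [monDeg_add, monDeg_single] at this ⊢
      omega
    · refine hzP.2.1.trans (toLex_lt_of_add_single_eq ?_ hPτ).le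
      rw [hy]
      abel
  · exact hzr.not_ge ((add_right_cancel h') ▸ hz.2.2)
  · exact hzr.not_ge ((toLex_lt_of_add_single_eq h'.symm hQτ).le.trans hz.2.2)

/-- The lexicographically largest monomial of the degree of `z` that agrees with `z` before `x_Q`
is an earlier generator than `C x_P x_r`, and it exceeds `C x_P x_r` only in the exponent of
`x_Q`; so linear quotients at `C x_P x_r` force `C x_P x_Q x_r` into the ideal of the earlier
generators, which `habove` forbids. -/
lemma not_mem_lexSeg_of_add_single_zero_eq (hlq : hasLinearQuotientsWrt k (lexSeg d u v) prec)
    (hP0 : P ≠ 0) (hPQ : P < Q) (hQr : Q < r)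
    (hA : toLex (C + e(P) + e(Q) + e(r)) < toLex (v + e(0)))
    (habove : ∀ j y, Q < j → y + e(j) = C + e(P) + e(Q) + e(r) → toLex u < toLex y)
    (hzQ : C + e(P) + e(r) ∈ lexSeg d u v) (h : z + e(0) = C + e(Q) + e(Q) + e(P)) :
    z ∉ lexSeg d u v := by
  intro hz
  have hQ0 : 0 < Q := (Fin.pos_iff_ne_zero.mpr hP0).trans hPQ
  have hz0 : z 0 + 1 = C 0 := by
    simpa [hQ0.ne, hP0.symm] using apply_add_one_of_add_single_eq h
  have hCu : C 0 ≤ u 0 := by simpa [hP0.symm, (hQ0.trans hQr).ne] using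
    apply_zero_le_of_toLex_le hzQ.2.2
  set y := collapseFrom Q z
  have hy0 : y 0 = z 0 := collapseFrom_apply_of_lt z hQ0
  have hy : y ∈ lexSeg d u v :=
    ⟨by rw [monDeg_eq_degree, degree_collapseFrom, ← monDeg_eq_degree, hz.1],
      hz.2.1.trans (toLex_le_collapseFrom Q z), (toLex_lt_of_apply_zero_lt (by omega)).le⟩
  have hprec : prec y (C + e(P) + e(r)) :=
    Or.inl (by simp [hy0, hP0.symm, (hQ0.trans hQr).ne]; omega)
  obtain ⟨i, hi, z₂, hz₂, hz₂Q, hle⟩ := exists_apply_lt_of_hasLinearQuotientsWrt hlq hzQ hy hprec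
  have hiQ : i = Q := by
    rcases lt_trichotomy i Q with hiQ | rfl | hQi
    · rw [collapseFrom_apply_of_lt z hiQ] at hi
      rcases eq_or_ne i 0 with rfl | hi0
      · simp [hP0.symm, (hQ0.trans hQr).ne] at hi
        omega
      · have := apply_eq_of_add_single_eq h (Ne.symm hi0)
        simp [Finsupp.single_apply, hiQ.ne', (hiQ.trans hQr).ne'] at this hi
        omega
    · rfl
    · rw [collapseFrom_apply_of_gt z hQi] at hi
      omega
  rw [hiQ] at hle
  obtain ⟨τ, hτ⟩ := exists_add_single_eq_of_mem_lexSeg hz₂ hle (by simp [hzQ.1.symm])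
  have hτ' : z₂ + e(τ) = C + e(P) + e(Q) + e(r) := hτ.trans (by abel)
  have hQτ := lt_of_prec_of_add_single_eq hτ (ne_zero_of_add_single_eq hz₂ hτ' hA) hz₂Q
  exact (habove τ z₂ hQτ hτ').not_ge hz₂.2.2

/-- Here `A = C x_P x_Q x_r`, `r = max(A)`, and `P < Q` play the two largest `j` with
`A / x_j ∈ L(u,v)`. The generator `C x_Q²` lies between `A / x_P` and `A / x_Q`, and
`A / x_Q ≺ C x_Q²`, so linear quotients at `C x_Q²` put `x_P` or `x_r` into the colon ideal. -/
lemma not_hasLinearQuotientsWrt_of_lt_maxVar (hP0 : P ≠ 0) (hPQ : P < Q) (hQr : Q < r) (hCr : ∀ j, r < j → C j = 0)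
    (hA : toLex (C + e(P) + e(Q) + e(r)) < toLex (v + e(0)))
    (hgap : ∀ j y, P < j → j < Q → y + e(j) = C + e(P) + e(Q) + e(r) → y ∉ lexSeg d u v)
    (habove : ∀ j y, Q < j → y + e(j) = C + e(P) + e(Q) + e(r) → toLex u < toLex y)
    (hzP : C + e(Q) + e(r) ∈ lexSeg d u v) (hzQ : C + e(P) + e(r) ∈ lexSeg d u v) :
    ¬ hasLinearQuotientsWrt k (lexSeg d u v) prec := by
  intro hlq
  have hPr := hPQ.trans hQr
  have hQ0 : 0 < Q := (Fin.pos_iff_ne_zero.mpr hP0).trans hPQ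
  have hwQ : toLex (C + e(Q) + e(Q)) < toLex (C + e(P) + e(r)) := by
    refine Finsupp.Lex.lt_iff.mpr ⟨P, fun j hj => ?_, ?_⟩
    · simp [hj.ne', (hj.trans hPQ).ne', (hj.trans hPr).ne']
    · simp [hPQ.ne, hPr.ne]
  have hw : C + e(Q) + e(Q) ∈ lexSeg d u v := by
    refine ⟨?_, hzP.2.1.trans (toLex_add_single_lt_add_single _ hQr).le, hwQ.le.trans hzQ.2.2⟩
    have := hzQ.1
    simp only [monDeg_add, monDeg_single] at this ⊢
    omega
  have hprec : prec (C + e(P) + e(r)) (C + e(Q) + e(Q)) :=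
    Or.inr ⟨by simp [hP0.symm, hQ0.ne, (hQ0.trans hQr).ne], hwQ⟩
  obtain ⟨i, hi, z, hz, hzw, hle⟩ := exists_apply_lt_of_hasLinearQuotientsWrt hlq hw hzQ hprec
  obtain ⟨τ, hτ⟩ := exists_add_single_eq_of_mem_lexSeg hz hle (by simp [hw.1])
  have hiPr : i = P ∨ i = r := by
    by_contra! hne
    simp only [Finsupp.add_apply, Finsupp.single_apply, if_neg hne.1.symm,
      if_neg hne.2.symm] at hi
    split_ifs at hi <;> omega
  rcases hiPr with rfl | rfl
  · have hzr : toLex u < toLex (C + e(i) + e(Q)) := habove r _ hQr (by abel)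
    rcases eq_or_ne τ 0 with rfl | hτ0
    · exact not_mem_lexSeg_of_add_single_zero_eq hlq hP0 hPQ hQr hA habove hzQ hτ hz
    · exact not_prec_sq_of_add_single_eq_add_single_left hPQ hQr hgap hzr hzP hz hτ0 hτ hzw
  · exact not_prec_sq_of_add_single_eq_add_single_right hPQ hQr hCr hA hz hτ hzw

/-- If `A / x_{max(A)} ∉ L(u,v)` and `P < Q` are the two largest `j` with `A / x_j ∈ L(u,v)`, then
`A / x_Q` is divisible by `x_P x_{max(A)}`: the configuration excluded above. -/
theorem exists_mem_lexSeg_add_single_maxVar_eq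
    (hlq : hasLinearQuotientsWrt k (lexSeg d u v) prec) {A zp zq : Mon n} {p q : Fin n}
    (hA : toLex A < toLex (v + e(0))) (hp : zp ∈ lexSeg d u v) (hq : zq ∈ lexSeg d u v)
    (hzp : zp + e(p) = A) (hzq : zq + e(q) = A) (hpq : p < q) :
    ∃ G ∈ lexSeg d u v, G + e(maxVar A) = A := by
  classical
  by_contra! hmax
  obtain ⟨P, hPD, Q, hQD, hPQ, hQ, hP⟩ := Finset.exists_two_greatest
    (s := Finset.univ.filter fun j => ∃ y ∈ lexSeg d u v, y + e(j) = A)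
    (by simpa using ⟨zp, hp, hzp⟩) (by simpa using ⟨zq, hq, hzq⟩) hpq
  simp only [Finset.mem_filter, Finset.mem_univ, true_and] at hPD hQD hQ hP
  obtain ⟨zP, hzP, hzPA⟩ := hPD
  obtain ⟨zQ, hzQ, hzQA⟩ := hQD
  have hA0 : A ≠ 0 := by rintro rfl; simp at hzp
  generalize hr : maxVar A = r at hmax
  have hQr : Q < r := hr ▸ (le_maxVar (by simp [← hzQA])).lt_of_ne
    fun h => hmax zQ hzQ (hr ▸ h ▸ hzQA)
  obtain ⟨C, hC⟩ := exists_add_single_add_single_eq (x := zQ) (hPQ.trans hQr).ne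
    (by rw [apply_eq_of_add_single_eq hzQA hPQ.ne']; simp [← hzPA])
    (by rw [apply_eq_of_add_single_eq hzQA hQr.ne, ← hr]; exact apply_maxVar_ne_zero hA0)
  have hAC : C + e(P) + e(Q) + e(r) = A := by rw [← hzQA, ← hC]; abel
  have hzPC : C + e(Q) + e(r) = zP := add_right_cancel (b := e(P)) (by rw [hzPA, ← hAC]; abel)
  refine not_hasLinearQuotientsWrt_of_lt_maxVar (ne_zero_of_add_single_eq hzP hzPA hA) hPQ hQr
    (fun j hj => ?_) (hAC ▸ hA) (fun j y hPj hjQ hy hyL => ?_) (fun j y hQj hy => ?_)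
    (hzPC ▸ hzP) (hC ▸ hzQ) hlq
  · have := (le_maxVar (m := A) (i := j)).mt (hr ▸ hj.not_ge)
    rw [← hAC] at this
    simp at this
    omega
  · exact (hP j ⟨y, hyL, hy.trans hAC⟩ hjQ).not_gt hPj
  · exact toLex_lt_of_add_single_eq_of_not_mem hzQ hzQA (hy.trans hAC) hQj
      fun hyL => (hQ j ⟨y, hyL, hy.trans hAC⟩).not_gt hQj

end LinearQuotients

section Decomposition

variable {n : ℕ} [NeZero n] {k : Type*} [Field k] {d : ℕ} {u v : Mon n}

theorem isDecompOf_sub_single_zero {w : Mon n} {s : Fin n} (hw : w ∈ lexSeg d u v)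
    (hm : toLex (v + e(0)) ≤ toLex (w + e(s))) :
    isDecompOf k d u v (w + e(s)) (w + e(s) - e(0)) := by
  obtain ⟨G, hG⟩ := exists_add_single_eq (x := w + e(s)) (i := 0) (by
    have := apply_zero_le_of_toLex_le hm
    simp only [Finsupp.add_apply, Finsupp.single_eq_same] at this ⊢
    omega)
  have hmdeg : monDeg (w + e(s)) = d + 1 := by simp [hw.1]
  have hGL : G ∈ lexSeg d u v := by
    refine ⟨monDeg_eq_of_add_single_eq hG hmdeg, ?_, ?_⟩
    · exact le_of_add_le_add_right (a := toLex (e(0))) (hG ▸ hm)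
    · rcases eq_or_ne s 0 with rfl | hs
      · exact add_right_cancel hG ▸ hw.2.2
      · have h0 := apply_add_one_of_add_single_eq hG
        simp only [Finsupp.add_apply, Finsupp.single_eq_of_ne' hs] at h0
        have := apply_zero_le_of_toLex_le hw.2.2
        exact (toLex_lt_of_apply_zero_lt (by omega)).le
  rw [← eq_tsub_of_add_eq hG]
  refine isDecompOf_of_forall hmdeg hGL (hG ▸ le_self_add) fun z _ τ hτ => ?_
  rcases eq_or_ne τ 0 with rfl | hτ0
  · exact Or.inl (add_right_cancel (hG.trans hτ.symm))
  · exact Or.inr (prec_of_add_single_zero_eq (hG.trans hτ.symm) hτ0)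

theorem isDecompOf_sub_single_maxVar (hlq : hasLinearQuotientsWrt k (lexSeg d u v) prec)
    {A zp zq : Mon n} {p q : Fin n} (hAdeg : monDeg A = d + 1)
    (hA : toLex A < toLex (v + e(0))) (hp : zp ∈ lexSeg d u v) (hq : zq ∈ lexSeg d u v)
    (hzp : zp + e(p) = A) (hzq : zq + e(q) = A) (hpq : p < q) :
    isDecompOf k d u v A (A - e(maxVar A)) := by
  obtain ⟨G, hG, hGA⟩ := exists_mem_lexSeg_add_single_maxVar_eq hlq hA hp hq hzp hzq hpq
  rw [← eq_tsub_of_add_eq hGA]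
  refine isDecompOf_of_forall hAdeg hG (hGA ▸ le_self_add) fun z hz τ hτ => ?_
  have hτr : τ ≤ maxVar A := le_maxVar (by simp [← hτ])
  rcases hτr.lt_or_eq with hlt | rfl
  · exact Or.inr (prec_of_add_single_eq_of_lt (hGA.trans hτ.symm)
      (ne_zero_of_add_single_eq hz hτ hA) hlt)
  · exact Or.inl (add_right_cancel (hGA.trans hτ.symm))

end Decomposition

theorem decomposition_function_formula_general {n : ℕ} [NeZero n] (k : Type*) [Field k]
    (d : ℕ) (u v : Mon n)
    (hlq : hasLinearQuotientsWrt k (lexSeg d u v) prec) :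
    ∀ w ∈ lexSeg d u v, ∀ s ∈ setW k d u v w,
      (toLex (v + Finsupp.single 0 1) ≤ toLex (w + Finsupp.single s 1) →
        isDecompOf k d u v (w + Finsupp.single s 1)
          (w + Finsupp.single s 1 - Finsupp.single 0 1)) ∧
      (toLex (w + Finsupp.single s 1) < toLex (v + Finsupp.single 0 1) →
        isDecompOf k d u v (w + Finsupp.single s 1)
          (w + Finsupp.single s 1 - Finsupp.single (maxVar w) 1)) := by
  intro w hw s hs
  refine ⟨isDecompOf_sub_single_zero hw, fun hm => ?_⟩
  have hmdeg : monDeg (w + e(s)) = d + 1 := by simp [hw.1]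
  obtain ⟨z, ⟨hz, hzw⟩, hzm⟩ := monomial_mem_monomialIdeal_iff.mp hs
  obtain ⟨t, ht⟩ := exists_add_single_eq_of_mem_lexSeg hz hzm hmdeg
  have hst : s < t := lt_of_prec_of_add_single_eq ht (ne_zero_of_add_single_eq hz ht hm) hzw
  have hwt : w t ≠ 0 := by
    have := apply_add_one_of_add_single_eq ht
    rw [Finsupp.add_apply, Finsupp.single_eq_of_ne' hst.ne] at this
    omega
  have hmax : maxVar (w + e(s)) = maxVar w :=
    maxVar_add_single (fun h => by simp [h] at hwt) (hst.le.trans (le_maxVar hwt))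
  rw [← hmax]
  exact isDecompOf_sub_single_maxVar hlq hmdeg hm hw hz rfl ht hst

/-- Formula for the decomposition function of a completely lexsegment ideal with linear
quotients with respect to `≺` : for `w ∈ L(u,v)` and `s ∈ set(w)`,
`g(x_s w) = x_s w / x_1` if `x_s w ≥_lex x_1 v`, and `g(x_s w) = x_s w / x_{max(w)}` if
`x_s w <_lex x_1 v`. -/
theorem decomposition_function_formula {n : ℕ} [NeZero n] (hn : 2 ≤ n) (k : Type*) [Field k]
    (d : ℕ) (hd : 2 ≤ d) (u v : Mon n) (hu : monDeg u = d) (hv : monDeg v = d)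
    (ha1 : 0 < u 0) (huv : toLex v ≤ toLex u)
    (hcl : IsCompletelyLexSeg (lexSeg d u v))
    (hlq : hasLinearQuotientsWrt k (lexSeg d u v) prec) :
    ∀ w ∈ lexSeg d u v, ∀ s ∈ setW k d u v w,
      (toLex (v + Finsupp.single 0 1) ≤ toLex (w + Finsupp.single s 1) →
        isDecompOf k d u v (w + Finsupp.single s 1)
          (w + Finsupp.single s 1 - Finsupp.single 0 1)) ∧
      (toLex (w + Finsupp.single s 1) < toLex (v + Finsupp.single 0 1) →
        isDecompOf k d u v (w + Finsupp.single s 1)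
          (w + Finsupp.single s 1 - Finsupp.single (maxVar w) 1)) :=
  decomposition_function_formula_general k d u v hlq
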